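/- arXiv:2406.09111 — 13 statements merged into one kernel-verified Lean document; each statement's English description precedes it below -/
import Mathlib

section
/- Consider the simplest contextuality scenario with preparations x ∈ {0,1,2,3} and measurements y ∈ {0,1} with binary outcomes z ∈ {0,1}. Let Λ be a finite set, let μ(λ|x) ≥ 0 with Σ_{λ∈Λ} μ(λ|x) = 1 for each x, let ξ(z|λ,y) ≥ 0 with ξ(0|λ,y) + ξ(1|λ,y) = 1 for all λ, y, and suppose the preparation-noncontextuality condition holds pointwise in λ: ½(μ(λ|0) + μ(λ|1)) = ½(μ(λ|2) + μ(λ|3)) for every λ ∈ Λ. Define p_{x,y} := Σ_{λ∈Λ} μ(λ|x) ξ(0|λ,y). Then p_{1,0} − p_{2,0} − p_{0,1} + p_{2,1} ≤ 1. -/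
open Finset

/-- noncontextuality inequality of the simplest contextuality scenario:
`p_{1,0} − p_{2,0} − p_{0,1} + p_{2,1} ≤ 1`. -/
theorem stmt_6 {Λ : Type*} [Fintype Λ]
    (μ : Λ → Fin 4 → ℝ) (ξ : Λ → Fin 2 → Fin 2 → ℝ)
    (hμ0 : ∀ l x, 0 ≤ μ l x)
    (hμ1 : ∀ x, ∑ l, μ l x = 1)
    (hξ0 : ∀ l z y, 0 ≤ ξ l z y)
    (hξ1 : ∀ l y, ξ l 0 y + ξ l 1 y = 1)
    (hnc : ∀ l, (μ l 0 + μ l 1) / 2 = (μ l 2 + μ l 3) / 2)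
    (p : Fin 4 → Fin 2 → ℝ)
    (hp : ∀ x y, p x y = ∑ l, μ l x * ξ l 0 y) :
    p 1 0 - p 2 0 - p 0 1 + p 2 1 ≤ 1 := by
  simp only [hp]
  rw [← Finset.sum_sub_distrib, ← Finset.sum_sub_distrib, ← Finset.sum_add_distrib]
  calc (∑ l, (μ l 1 * ξ l 0 0 - μ l 2 * ξ l 0 0 - μ l 0 * ξ l 0 1 + μ l 2 * ξ l 0 1))
      ≤ ∑ l, μ l 1 := by
        apply Finset.sum_le_sum
        intro l _
        have hnc' := hnc l
        have ha := hξ1 l 0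
        have hb := hξ1 l 1
        have ha0 := hξ0 l 0 0
        have hb0 := hξ0 l 0 1
        have ha1 := hξ0 l 1 0
        have hb1 := hξ0 l 1 1
        have h0 := hμ0 l 0
        have h1 := hμ0 l 1
        have h2 := hμ0 l 2
        have h3 := hμ0 l 3
        rcases le_total (ξ l 0 0) (ξ l 0 1) with h | h
        · nlinarith [mul_nonneg h0 ha0, mul_nonneg (sub_nonneg.2 h) h3]
        · nlinarith [mul_nonneg h1 hb0, mul_nonneg (sub_nonneg.2 h) h2]
    _ = 1 := hμ1 1
end

section
/- There exist 2 × 2 complex density matrices ρ₀, ρ₁, ρ₂, ρ₃ (positive semidefinite with trace 1) satisfying ρ₀ + ρ₁ = ρ₂ + ρ₃, and 2 × 2 complex matrices M₀, M₁ with 0 ≤ M_y ≤ I in the Loewner order (y = 0, 1), such that, writing p_{x,y} := Re(Tr(ρ_x M_y)), one has p_{1,0} − p_{2,0} − p_{0,1} + p_{2,1} = √2. -/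
open ComplexOrder

lemma psd2 (a b c : ℝ) (ha : 0 ≤ a) (hc : 0 ≤ c) (h : b^2 ≤ a*c) :
    (!![(a:ℂ), (b:ℂ); (b:ℂ), (c:ℂ)]).PosSemidef := by
  rw [Matrix.posSemidef_iff_dotProduct_mulVec]; constructor
  · ext i j
    fin_cases i <;> fin_cases j <;>
      simp [Matrix.conjTranspose_apply]
  · intro x
    have hx : dotProduct (star x) ((!![(a:ℂ), (b:ℂ); (b:ℂ), (c:ℂ)]).mulVec x) =
        (starRingEnd ℂ) (x 0) * ((a:ℂ) * x 0 + (b:ℂ) * x 1) +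
        (starRingEnd ℂ) (x 1) * ((b:ℂ) * x 0 + (c:ℂ) * x 1) := by
      simp [dotProduct, Matrix.mulVec, Fin.sum_univ_two, mul_comm]
    rw [hx, Complex.le_def]
    constructor
    · simp only [Complex.add_re, Complex.mul_re, Complex.conj_re, Complex.conj_im,
        Complex.add_im, Complex.mul_im, Complex.ofReal_re, Complex.ofReal_im, Complex.zero_re]
      set p := (x 0).re; set q := (x 0).im; set u := (x 1).re; set v := (x 1).im
      have h4 : 0 ≤ a*(p^2+q^2)+c*(u^2+v^2) := by positivity
      have ht2 : (p*u+q*v)^2 ≤ (p^2+q^2)*(u^2+v^2) := by nlinarith [sq_nonneg (p*v-q*u)]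
      have key : (2*b*(p*u+q*v))^2 ≤ (a*(p^2+q^2)+c*(u^2+v^2))^2 := by
        nlinarith [mul_le_mul_of_nonneg_right h (sq_nonneg (p*u+q*v)),
          mul_le_mul_of_nonneg_left ht2 (mul_nonneg ha hc),
          sq_nonneg (a*(p^2+q^2)-c*(u^2+v^2))]
      nlinarith [key, h4]
    · simp only [Complex.add_im, Complex.add_re, Complex.mul_im, Complex.mul_re,
        Complex.conj_re, Complex.conj_im,
        Complex.ofReal_re, Complex.ofReal_im, Complex.zero_im]
      ring

open Finset ComplexOrder

noncomputable def rt : ℝ := Real.sqrt 2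

lemma rt_pos : 0 < rt := Real.sqrt_pos.mpr (by norm_num)
lemma rt_sq : rt * rt = 2 := Real.mul_self_sqrt (by norm_num)
lemma rt_ge_one : 1 ≤ rt := by nlinarith [rt_pos, rt_sq]

/-- there is a qubit strategy satisfying the indistinguishability condition
`ρ₀ + ρ₁ = ρ₂ + ρ₃` attaining the quantum value `√2` of the noncontextuality expression. -/
theorem stmt_7 :
    ∃ (ρ : Fin 4 → Matrix (Fin 2) (Fin 2) ℂ) (M : Fin 2 → Matrix (Fin 2) (Fin 2) ℂ),
      (∀ x, (ρ x).PosSemidef) ∧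
      (∀ x, (ρ x).trace = 1) ∧
      ρ 0 + ρ 1 = ρ 2 + ρ 3 ∧
      (∀ y, (M y).PosSemidef) ∧
      (∀ y, (1 - M y).PosSemidef) ∧
      ((ρ 1 * M 0).trace).re - ((ρ 2 * M 0).trace).re
        - ((ρ 0 * M 1).trace).re + ((ρ 2 * M 1).trace).re = Real.sqrt 2 := by
  have h0 := rt_pos
  have h2 := rt_sq
  have h1 := rt_ge_one
  have hinv : 1/rt ≤ 1 := by
    rw [div_le_one h0]; exact h1
  have hane : 0 ≤ (1 + 1/rt)/2 := by positivity
  have hcne : 0 ≤ (1 - 1/rt)/2 := by linarith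
  have hbac : (1/(2*rt))^2 ≤ ((1+1/rt)/2) * ((1-1/rt)/2) := by
    have : (1/(2*rt))^2 = 1/8 := by
      field_simp; nlinarith
    rw [this]
    have : ((1+1/rt)/2) * ((1-1/rt)/2) = 1/8 := by
      field_simp; nlinarith
    rw [this]
  refine ⟨![!![((0:ℝ):ℂ), ((0:ℝ):ℂ); ((0:ℝ):ℂ), ((1:ℝ):ℂ)],
            !![((1:ℝ):ℂ), ((0:ℝ):ℂ); ((0:ℝ):ℂ), ((0:ℝ):ℂ)],
            !![(((1:ℝ)/2:ℝ):ℂ), (((1:ℝ)/2:ℝ):ℂ); (((1:ℝ)/2:ℝ):ℂ), (((1:ℝ)/2:ℝ):ℂ)],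
            !![(((1:ℝ)/2:ℝ):ℂ), ((-(1/2):ℝ):ℂ); ((-(1/2):ℝ):ℂ), (((1:ℝ)/2:ℝ):ℂ)]],
          ![!![(((1+1/rt)/2:ℝ):ℂ), ((-(1/(2*rt)):ℝ):ℂ); ((-(1/(2*rt)):ℝ):ℂ), (((1-1/rt)/2:ℝ):ℂ)],
            !![(((1+1/rt)/2:ℝ):ℂ), ((1/(2*rt):ℝ):ℂ); ((1/(2*rt):ℝ):ℂ), (((1-1/rt)/2:ℝ):ℂ)]],
          ?_, ?_, ?_, ?_, ?_, ?_⟩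
  · intro x
    fin_cases x
    · exact psd2 0 0 1 le_rfl (by norm_num) (by norm_num)
    · exact psd2 1 0 0 (by norm_num) le_rfl (by norm_num)
    · exact psd2 (1/2) (1/2) (1/2) (by norm_num) (by norm_num) (by norm_num)
    · exact psd2 (1/2) (-(1/2)) (1/2) (by norm_num) (by norm_num) (by norm_num)
  · intro x
    fin_cases x <;>
      simp [Matrix.trace, Fin.sum_univ_two] <;> norm_num
  · ext i j
    fin_cases i <;> fin_cases j <;> simp <;> norm_num
  · intro y
    fin_cases y
    · exact psd2 ((1+1/rt)/2) (-(1/(2*rt))) ((1-1/rt)/2) hane hcne (by rw [neg_pow]; simpa using hbac)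
    · exact psd2 ((1+1/rt)/2) (1/(2*rt)) ((1-1/rt)/2) hane hcne hbac
  · intro y
    fin_cases y
    · show ((1:Matrix (Fin 2) (Fin 2) ℂ)
          - !![(((1+1/rt)/2:ℝ):ℂ), ((-(1/(2*rt)):ℝ):ℂ); ((-(1/(2*rt)):ℝ):ℂ), (((1-1/rt)/2:ℝ):ℂ)]).PosSemidef
      have he : (1 : Matrix (Fin 2) (Fin 2) ℂ)
          - !![(((1+1/rt)/2:ℝ):ℂ), ((-(1/(2*rt)):ℝ):ℂ); ((-(1/(2*rt)):ℝ):ℂ), (((1-1/rt)/2:ℝ):ℂ)]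
          = !![(((1-1/rt)/2:ℝ):ℂ), ((1/(2*rt):ℝ):ℂ); ((1/(2*rt):ℝ):ℂ), (((1+1/rt)/2:ℝ):ℂ)] := by
        ext i j
        fin_cases i <;> fin_cases j <;>
          simp [Matrix.one_apply] <;> push_cast <;> ring
      rw [he]
      exact psd2 ((1-1/rt)/2) (1/(2*rt)) ((1+1/rt)/2) hcne hane (by nlinarith)
    · show ((1:Matrix (Fin 2) (Fin 2) ℂ)
          - !![(((1+1/rt)/2:ℝ):ℂ), ((1/(2*rt):ℝ):ℂ); ((1/(2*rt):ℝ):ℂ), (((1-1/rt)/2:ℝ):ℂ)]).PosSemidef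
      have he : (1 : Matrix (Fin 2) (Fin 2) ℂ)
          - !![(((1+1/rt)/2:ℝ):ℂ), ((1/(2*rt):ℝ):ℂ); ((1/(2*rt):ℝ):ℂ), (((1-1/rt)/2:ℝ):ℂ)]
          = !![(((1-1/rt)/2:ℝ):ℂ), ((-(1/(2*rt)):ℝ):ℂ); ((-(1/(2*rt)):ℝ):ℂ), (((1+1/rt)/2:ℝ):ℂ)] := by
        ext i j
        fin_cases i <;> fin_cases j <;>
          simp [Matrix.one_apply] <;> push_cast <;> ring
      rw [he]
      exact psd2 ((1-1/rt)/2) (-(1/(2*rt))) ((1+1/rt)/2) hcne hane (by nlinarith)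
  · show _ = Real.sqrt 2
    simp [Matrix.trace, Matrix.mul_apply, Fin.sum_univ_two]
    rw [show Real.sqrt 2 = rt from rfl]
    have hne : rt ≠ 0 := ne_of_gt h0
    conv_rhs => rw [show rt = 2 * rt⁻¹ from by field_simp; nlinarith]
    ring
end

section
/- For every n ≥ 1, every collection of n × n complex density matrices ρ₀, ρ₁, ρ₂, ρ₃ (positive semidefinite with trace 1) satisfying ρ₀ + ρ₁ = ρ₂ + ρ₃, and every pair of n × n complex matrices M₀, M₁ with 0 ≤ M_y ≤ I in the Loewner order, writing p_{x,y} := Re(Tr(ρ_x M_y)), one has p_{1,0} − p_{2,0} − p_{0,1} + p_{2,1} ≤ √2. -/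
open Finset ComplexOrder

section StmtAux
open Matrix
open scoped MatrixOrder

variable {n : ℕ}

lemma diag_re_nonneg {A : Matrix (Fin n) (Fin n) ℂ} (hA : A.PosSemidef) (i : Fin n) :
    0 ≤ (A i i).re := by
  have h := hA.re_dotProduct_nonneg (Pi.single i 1)
  simpa [dotProduct, mulVec, Pi.single_apply, Finset.sum_ite_eq, Finset.sum_ite_eq'] using h

lemma trace_re_nonneg {A : Matrix (Fin n) (Fin n) ℂ} (hA : A.PosSemidef) :
    0 ≤ A.trace.re := by
  rw [Matrix.trace, Complex.re_sum]
  exact Finset.sum_nonneg fun i _ => diag_re_nonneg hA i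

lemma tr_mul_psd_re_nonneg {A B : Matrix (Fin n) (Fin n) ℂ}
    (hA : A.PosSemidef) (hB : B.PosSemidef) : 0 ≤ ((A * B).trace).re := by
  have hs : CFC.sqrt B * CFC.sqrt B = B := CFC.sqrt_mul_sqrt_self B hB.nonneg
  have hsh : (CFC.sqrt B).conjTranspose = CFC.sqrt B := (CFC.sqrt_nonneg B).posSemidef.isHermitian
  have h1 : (CFC.sqrt B * A * CFC.sqrt B).PosSemidef := by
    have := hA.mul_mul_conjTranspose_same (CFC.sqrt B)
    rwa [hsh] at this
  have h2 : A * B = A * (CFC.sqrt B * CFC.sqrt B) := by rw [hs]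
  rw [h2, ← Matrix.mul_assoc, Matrix.trace_mul_comm, ← Matrix.mul_assoc]
  exact trace_re_nonneg h1

lemma trace_entry (X Y : Matrix (Fin n) (Fin n) ℂ) :
    (X * Y).trace = ∑ p : Fin n × Fin n, X p.2 p.1 * Y p.1 p.2 := by
  rw [Matrix.trace, Fintype.sum_prod_type]
  simp only [Matrix.diag, Matrix.mul_apply]
  exact Finset.sum_comm

lemma cs_trace {ρ K : Matrix (Fin n) (Fin n) ℂ} (hρ : ρ.PosSemidef) (htr : ρ.trace = 1)
    (hK : K.IsHermitian) : ((ρ * K).trace).re ≤ Real.sqrt (((ρ * (K * K)).trace).re) := by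
  set s := CFC.sqrt ρ with hsdef
  have hs : s * s = ρ := CFC.sqrt_mul_sqrt_self ρ hρ.nonneg
  have hsh : sᴴ = s := (CFC.sqrt_nonneg ρ).posSemidef.isHermitian
  set Y := s * K with hY
  have hconj : ∀ i j : Fin n, s i j = (starRingEnd ℂ) (s j i) := by
    intro i j
    conv_lhs => rw [← hsh]
    rfl
  set f : Fin n × Fin n → ℝ := fun p => ‖s p.1 p.2‖ with hf
  set g : Fin n × Fin n → ℝ := fun p => ‖Y p.1 p.2‖ with hg
  have h1 : ((ρ * K).trace).re ≤ ∑ p : Fin n × Fin n, f p * g p := by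
    have : ρ * K = s * Y := by rw [hY, ← Matrix.mul_assoc, hs]
    rw [this, trace_entry, Complex.re_sum]
    refine Finset.sum_le_sum fun p _ => ?_
    calc (s p.2 p.1 * Y p.1 p.2).re ≤ ‖s p.2 p.1 * Y p.1 p.2‖ := Complex.re_le_norm _
      _ = f p * g p := by
          rw [norm_mul, hf, hg]; simp only []
          rw [hconj p.2 p.1, Complex.norm_conj]
  have h2 : ∑ p : Fin n × Fin n, f p ^ 2 = 1 := by
    have : (ρ.trace).re = 1 := by rw [htr]; simp
    rw [← this, ← hs, trace_entry, Complex.re_sum]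
    refine Finset.sum_congr rfl fun p _ => ?_
    rw [hconj p.2 p.1, mul_comm, Complex.mul_conj]
    simp [hf, Complex.sq_norm, Complex.normSq_conj]
  have hY' : (ρ * (K * K)).trace = (Yᴴ * Y).trace := by
    have e1 : Yᴴ * Y = K * (ρ * K) := by
      rw [hY, Matrix.conjTranspose_mul, hsh, hK.eq, Matrix.mul_assoc, ← Matrix.mul_assoc s, hs]
    rw [e1, Matrix.trace_mul_comm K (ρ * K), Matrix.mul_assoc]
  have h3 : ∑ p : Fin n × Fin n, g p ^ 2 = ((ρ * (K * K)).trace).re := by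
    rw [hY', trace_entry, Complex.re_sum]
    refine Finset.sum_congr rfl fun p _ => ?_
    have : Yᴴ p.2 p.1 = (starRingEnd ℂ) (Y p.1 p.2) := rfl
    rw [this, mul_comm, Complex.mul_conj]
    simp [hg, Complex.sq_norm]
  have hnn : 0 ≤ ∑ p : Fin n × Fin n, f p * g p :=
    Finset.sum_nonneg fun p _ => mul_nonneg (norm_nonneg _) (norm_nonneg _)
  have hnn2 : 0 ≤ ((ρ * (K * K)).trace).re := by
    rw [← h3]; exact Finset.sum_nonneg fun p _ => sq_nonneg _
  have hcs := Finset.sum_mul_sq_le_sq_mul_sq Finset.univ f g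
  rw [h2, h3, one_mul] at hcs
  exact le_trans h1 ((Real.le_sqrt hnn hnn2).mpr hcs)

lemma sqrt_four_sum {w x y z : ℝ} (hw : 0 ≤ w) (hx : 0 ≤ x) (hy : 0 ≤ y) (hz : 0 ≤ z) :
    Real.sqrt w + Real.sqrt x + Real.sqrt y + Real.sqrt z
      ≤ 2 * Real.sqrt (w + x + y + z) := by
  have h2 : 2 * Real.sqrt (w + x + y + z) = Real.sqrt (2 ^ 2 * (w + x + y + z)) := by
    rw [Real.sqrt_mul (by positivity), Real.sqrt_sq (by norm_num)]
  rw [h2]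
  apply Real.le_sqrt_of_sq_le
  nlinarith [Real.sq_sqrt hw, Real.sq_sqrt hx, Real.sq_sqrt hy, Real.sq_sqrt hz,
    sq_nonneg (Real.sqrt w - Real.sqrt x), sq_nonneg (Real.sqrt w - Real.sqrt y),
    sq_nonneg (Real.sqrt w - Real.sqrt z), sq_nonneg (Real.sqrt x - Real.sqrt y),
    sq_nonneg (Real.sqrt x - Real.sqrt z), sq_nonneg (Real.sqrt y - Real.sqrt z)]

lemma one_sub_sq_psd {M : Matrix (Fin n) (Fin n) ℂ} (hM : M.PosSemidef)
    (hM' : (1 - M).PosSemidef) : (1 - (M + M - 1) * (M + M - 1)).PosSemidef := by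
  obtain ⟨s, hs, hT⟩ : ∃ s : Matrix (Fin n) (Fin n) ℂ,
      s * s = M ∧ (s * (1 - M) * s).PosSemidef := by
    refine ⟨CFC.sqrt M, CFC.sqrt_mul_sqrt_self M hM.nonneg, ?_⟩
    have := hM'.mul_mul_conjTranspose_same (CFC.sqrt M)
    rwa [(CFC.sqrt_nonneg M).posSemidef.isHermitian.eq] at this
  have hTeq : s * (1 - M) * s = M - M * M := by
    rw [← hs]; noncomm_ring
  have hfinal : 1 - (M + M - 1) * (M + M - 1)
      = s * (1 - M) * s + s * (1 - M) * s + (s * (1 - M) * s + s * (1 - M) * s) := by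
    rw [hTeq]; noncomm_ring
  rw [hfinal]
  exact (hT.add hT).add (hT.add hT)

end StmtAux

/-- in any dimension `n ≥ 1`, every quantum strategy satisfying
`ρ₀ + ρ₁ = ρ₂ + ρ₃` yields value at most `√2` for the noncontextuality expression. -/
theorem stmt_8 (n : ℕ) (hn : 1 ≤ n)
    (ρ : Fin 4 → Matrix (Fin n) (Fin n) ℂ)
    (M : Fin 2 → Matrix (Fin n) (Fin n) ℂ)
    (hρ : ∀ x, (ρ x).PosSemidef)
    (htr : ∀ x, (ρ x).trace = 1)
    (heq : ρ 0 + ρ 1 = ρ 2 + ρ 3)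
    (hM : ∀ y, (M y).PosSemidef)
    (hM' : ∀ y, (1 - M y).PosSemidef) :
    ((ρ 1 * M 0).trace).re - ((ρ 2 * M 0).trace).re
      - ((ρ 0 * M 1).trace).re + ((ρ 2 * M 1).trace).re ≤ Real.sqrt 2 := by
  set N0 : Matrix (Fin n) (Fin n) ℂ := M 0 + M 0 - 1 with hN0
  set N1 : Matrix (Fin n) (Fin n) ℂ := M 1 + M 1 - 1 with hN1
  have hH0 : N0.IsHermitian := by
    rw [hN0]; exact ((hM 0).1.add (hM 0).1).sub Matrix.isHermitian_one
  have hH1 : N1.IsHermitian := by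
    rw [hN1]; exact ((hM 1).1.add (hM 1).1).sub Matrix.isHermitian_one
  have hK : (N0 + N1).IsHermitian := hH0.add hH1
  have hK' : (N0 - N1).IsHermitian := hH0.sub hH1
  have hρ3 : ρ 3 = ρ 0 + ρ 1 - ρ 2 := by
    rw [eq_sub_iff_add_eq, add_comm]; exact heq.symm
  -- the key algebraic identity
  have key : (ρ 1 * (N0 + N1)).trace + (ρ 0 * (-(N0 + N1))).trace
      + (ρ 3 * (N0 - N1)).trace + (ρ 2 * (-(N0 - N1))).trace
      = 4 * ((ρ 1 * M 0).trace - (ρ 2 * M 0).trace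
          - (ρ 0 * M 1).trace + (ρ 2 * M 1).trace) := by
    rw [hρ3, hN0, hN1]
    simp only [Matrix.mul_add, Matrix.mul_sub, Matrix.mul_neg, Matrix.mul_one,
      Matrix.add_mul, Matrix.sub_mul, Matrix.trace_add, Matrix.trace_sub, Matrix.trace_neg]
    rw [htr 0, htr 1, htr 2]
    ring
  have keyre := congrArg Complex.re key
  simp only [Complex.add_re, Complex.sub_re, Complex.mul_re, Complex.re_ofNat,
    Complex.im_ofNat, zero_mul, sub_zero] at keyre
  -- Cauchy–Schwarz bounds on the four terms
  have c1 := cs_trace (hρ 1) (htr 1) hK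
  have c0 : ((ρ 0 * (-(N0 + N1))).trace).re
      ≤ Real.sqrt (((ρ 0 * ((N0 + N1) * (N0 + N1))).trace).re) := by
    have := cs_trace (hρ 0) (htr 0) hK.neg
    rwa [neg_mul_neg] at this
  have c3 := cs_trace (hρ 3) (htr 3) hK'
  have c2 : ((ρ 2 * (-(N0 - N1))).trace).re
      ≤ Real.sqrt (((ρ 2 * ((N0 - N1) * (N0 - N1))).trace).re) := by
    have := cs_trace (hρ 2) (htr 2) hK'.neg
    rwa [neg_mul_neg] at this
  -- nonnegativity of the second moments
  have hKK : ((N0 + N1) * (N0 + N1)).PosSemidef := by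
    have := Matrix.posSemidef_conjTranspose_mul_self (N0 + N1)
    rwa [hK.eq] at this
  have hKK' : ((N0 - N1) * (N0 - N1)).PosSemidef := by
    have := Matrix.posSemidef_conjTranspose_mul_self (N0 - N1)
    rwa [hK'.eq] at this
  have w1 := tr_mul_psd_re_nonneg (hρ 1) hKK
  have w0 := tr_mul_psd_re_nonneg (hρ 0) hKK
  have w3 := tr_mul_psd_re_nonneg (hρ 3) hKK'
  have w2 := tr_mul_psd_re_nonneg (hρ 2) hKK'
  have four := sqrt_four_sum w1 w0 w3 w2
  -- identify the total second moment
  have etot : ((ρ 1 * ((N0 + N1) * (N0 + N1))).trace).re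
      + ((ρ 0 * ((N0 + N1) * (N0 + N1))).trace).re
      + ((ρ 3 * ((N0 - N1) * (N0 - N1))).trace).re
      + ((ρ 2 * ((N0 - N1) * (N0 - N1))).trace).re
      = (((ρ 0 + ρ 1) * ((N0 + N1) * (N0 + N1) + (N0 - N1) * (N0 - N1))).trace).re := by
    have ec : (ρ 1 * ((N0 + N1) * (N0 + N1))).trace
        + (ρ 0 * ((N0 + N1) * (N0 + N1))).trace
        + (ρ 3 * ((N0 - N1) * (N0 - N1))).trace
        + (ρ 2 * ((N0 - N1) * (N0 - N1))).trace
        = ((ρ 0 + ρ 1) * ((N0 + N1) * (N0 + N1) + (N0 - N1) * (N0 - N1))).trace := by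
      rw [hρ3]
      simp only [Matrix.mul_add, Matrix.add_mul, Matrix.sub_mul, Matrix.trace_add,
        Matrix.trace_sub]
      ring
    have := congrArg Complex.re ec
    simpa only [Complex.add_re] using this
  -- bound the total second moment by 8
  have hD0 : (1 - N0 * N0).PosSemidef := by
    rw [hN0]; exact one_sub_sq_psd (hM 0) (hM' 0)
  have hD1 : (1 - N1 * N1).PosSemidef := by
    rw [hN1]; exact one_sub_sq_psd (hM 1) (hM' 1)
  have hpos := tr_mul_psd_re_nonneg ((hρ 0).add (hρ 1)) ((hD0.add hD0).add (hD1.add hD1))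
  have hiden : (N0 + N1) * (N0 + N1) + (N0 - N1) * (N0 - N1)
      + ((1 - N0 * N0) + (1 - N0 * N0) + ((1 - N1 * N1) + (1 - N1 * N1)))
      = (1 : Matrix (Fin n) (Fin n) ℂ) + 1 + 1 + 1 := by
    noncomm_ring
  have h88 : (((ρ 0 + ρ 1) * ((1 : Matrix (Fin n) (Fin n) ℂ) + 1 + 1 + 1)).trace).re = 8 := by
    simp only [Matrix.mul_add, Matrix.mul_one, Matrix.add_mul, Matrix.trace_add, htr]
    norm_num
  have split : (((ρ 0 + ρ 1) * ((N0 + N1) * (N0 + N1) + (N0 - N1) * (N0 - N1))).trace).re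
      + (((ρ 0 + ρ 1) * ((1 - N0 * N0) + (1 - N0 * N0)
          + ((1 - N1 * N1) + (1 - N1 * N1)))).trace).re = 8 := by
    rw [← Complex.add_re, ← Matrix.trace_add, ← Matrix.mul_add, hiden]
    exact h88
  have S8 : (((ρ 0 + ρ 1) * ((N0 + N1) * (N0 + N1) + (N0 - N1) * (N0 - N1))).trace).re ≤ 8 := by
    linarith
  have sqrt8 : Real.sqrt 8 = 2 * Real.sqrt 2 := by
    rw [show (8 : ℝ) = 2 ^ 2 * 2 by norm_num, Real.sqrt_mul (by positivity),
      Real.sqrt_sq (by norm_num)]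
  have smono := Real.sqrt_le_sqrt S8
  rw [sqrt8] at smono
  rw [etot] at four
  linarith
end

section
/- Consider Scenario 2 with preparations x ∈ {0,1,2,3} and measurements y ∈ {0,1,2} with binary outcomes. Let Λ be a finite set, μ(λ|x) ≥ 0 with Σ_λ μ(λ|x) = 1 for each x, ξ(0|λ,y) ∈ [0,1] for all λ, y, and suppose the preparation-noncontextuality condition holds pointwise in λ: (1/3)(μ(λ|0) + μ(λ|1) + μ(λ|2)) = ½(μ(λ|0) + μ(λ|3)) for every λ ∈ Λ. Define p_{x,y} := Σ_λ μ(λ|x) ξ(0|λ,y). Then ℐ₂ := −p_{0,0} + 2p_{1,0} + p_{0,1} − 2p_{2,1} ≤ 2. -/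
open Finset

/-- noncontextuality inequality `ℐ₂ ≤ 2` of Scenario 2. -/
theorem stmt_9 {Λ : Type*} [Fintype Λ]
    (μ : Λ → Fin 4 → ℝ) (ξ : Λ → Fin 3 → ℝ)
    (hμ0 : ∀ l x, 0 ≤ μ l x)
    (hμ1 : ∀ x, ∑ l, μ l x = 1)
    (hξ0 : ∀ l y, 0 ≤ ξ l y)
    (hξ1 : ∀ l y, ξ l y ≤ 1)
    (hnc : ∀ l, (μ l 0 + μ l 1 + μ l 2) / 3 = (μ l 0 + μ l 3) / 2)
    (p : Fin 4 → Fin 3 → ℝ)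
    (hp : ∀ x y, p x y = ∑ l, μ l x * ξ l y) :
    -p 0 0 + 2 * p 1 0 + p 0 1 - 2 * p 2 1 ≤ 2 := by
  have key : -p 0 0 + 2 * p 1 0 + p 0 1 - 2 * p 2 1
      = ∑ l, (-(μ l 0 * ξ l 0) + 2 * (μ l 1 * ξ l 0) + μ l 0 * ξ l 1
          - 2 * (μ l 2 * ξ l 1)) := by
    simp only [hp, Finset.mul_sum, ← Finset.sum_neg_distrib, ← Finset.sum_add_distrib,
      ← Finset.sum_sub_distrib]
  rw [key]
  have bound : ∀ l : Λ, -(μ l 0 * ξ l 0) + 2 * (μ l 1 * ξ l 0) + μ l 0 * ξ l 1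
      - 2 * (μ l 2 * ξ l 1) ≤ 2 * μ l 1 := by
    intro l
    have hc : 2 * μ l 1 + 2 * μ l 2 = μ l 0 + 3 * μ l 3 := by
      have := hnc l; linarith
    rcases le_or_gt (ξ l 1) (ξ l 0) with h | h
    · nlinarith [mul_nonneg (hμ0 l 0) (sub_nonneg.2 h), mul_nonneg (hμ0 l 2) (hξ0 l 1),
        mul_nonneg (hμ0 l 1) (sub_nonneg.2 (hξ1 l 0))]
    · nlinarith [mul_nonneg (hμ0 l 1) (sub_nonneg.2 (hξ1 l 1)),
        mul_nonneg (hμ0 l 2) (hξ0 l 0),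
        mul_nonneg (hμ0 l 3) (sub_nonneg.2 h.le)]
  calc ∑ l, (-(μ l 0 * ξ l 0) + 2 * (μ l 1 * ξ l 0) + μ l 0 * ξ l 1
          - 2 * (μ l 2 * ξ l 1)) ≤ ∑ l, 2 * μ l 1 := Finset.sum_le_sum fun l _ => bound l
    _ = 2 := by rw [← Finset.mul_sum, hμ1]; norm_num
end

section
/- Consider Scenario 2 as above, but additionally require the epistemic states to be deterministic: μ(λ|x) ∈ {0,1} for every λ ∈ Λ and every x ∈ {0,1,2,3}. Then for every such model, ℐ₂ := −p_{0,0} + 2p_{1,0} + p_{0,1} − 2p_{2,1} ≤ 1. -/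
open Finset

/-- in Scenario 2, deterministic epistemic states give `ℐ₂ ≤ 1`. -/
theorem stmt_10 {Λ : Type*} [Fintype Λ]
    (μ : Λ → Fin 4 → ℝ) (ξ : Λ → Fin 3 → ℝ)
    (hμ0 : ∀ l x, 0 ≤ μ l x)
    (hμ1 : ∀ x, ∑ l, μ l x = 1)
    (hdet : ∀ l x, μ l x = 0 ∨ μ l x = 1)
    (hξ0 : ∀ l y, 0 ≤ ξ l y)
    (hξ1 : ∀ l y, ξ l y ≤ 1)
    (hnc : ∀ l, (μ l 0 + μ l 1 + μ l 2) / 3 = (μ l 0 + μ l 3) / 2)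
    (p : Fin 4 → Fin 3 → ℝ)
    (hp : ∀ x y, p x y = ∑ l, μ l x * ξ l y) :
    -p 0 0 + 2 * p 1 0 + p 0 1 - 2 * p 2 1 ≤ 1 := by
  have key : ∀ l, μ l 1 = μ l 0 ∧ μ l 2 = μ l 0 := by
    intro l
    have h := hnc l
    rcases hdet l 0 with h0|h0 <;> rcases hdet l 1 with h1|h1 <;>
      rcases hdet l 2 with h2|h2 <;> rcases hdet l 3 with h3|h3 <;>
      rw [h0, h1, h2, h3] at h <;> rw [h0, h1, h2] <;> norm_num at h <;> norm_num
  have e1 : p 1 0 = p 0 0 := by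
    rw [hp, hp]; exact Finset.sum_congr rfl (fun l _ => by rw [(key l).1])
  have e2 : p 2 1 = p 0 1 := by
    rw [hp, hp]; exact Finset.sum_congr rfl (fun l _ => by rw [(key l).2])
  have h1 : p 0 0 ≤ 1 := by
    rw [hp]
    calc ∑ l, μ l 0 * ξ l 0 ≤ ∑ l, μ l 0 :=
          Finset.sum_le_sum (fun l _ => by nlinarith [hμ0 l 0, hξ1 l 0, hξ0 l 0])
      _ = 1 := hμ1 0
  have h2 : 0 ≤ p 0 1 := by
    rw [hp]
    exact Finset.sum_nonneg (fun l _ => mul_nonneg (hμ0 l 0) (hξ0 l 1))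
  linarith
end

section
/- Consider Scenario 3 with preparations x ∈ {0,1,2,3,4} and measurements y ∈ {0,1} with binary outcomes. Let Λ be a finite set, μ(λ|x) ≥ 0 with Σ_λ μ(λ|x) = 1 for each x, ξ(0|λ,y) ∈ [0,1] for all λ, y, and suppose the preparation-noncontextuality condition holds pointwise in λ: ½(μ(λ|0) + μ(λ|1)) = (1/3)(μ(λ|2) + μ(λ|3) + μ(λ|4)) for every λ ∈ Λ. Define p_{x,y} := Σ_λ μ(λ|x) ξ(0|λ,y). Then ℐ₃ := −3p_{0,0} + 2p_{2,0} − 3p_{1,1} + 2p_{2,1} ≤ 2. -/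
open Finset

/-- noncontextuality inequality `ℐ₃ ≤ 2` of Scenario 3. -/
theorem stmt_12 {Λ : Type*} [Fintype Λ]
    (μ : Λ → Fin 5 → ℝ) (ξ : Λ → Fin 2 → ℝ)
    (hμ0 : ∀ l x, 0 ≤ μ l x)
    (hμ1 : ∀ x, ∑ l, μ l x = 1)
    (hξ0 : ∀ l y, 0 ≤ ξ l y)
    (hξ1 : ∀ l y, ξ l y ≤ 1)
    (hnc : ∀ l, (μ l 0 + μ l 1) / 2 = (μ l 2 + μ l 3 + μ l 4) / 3)
    (p : Fin 5 → Fin 2 → ℝ)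
    (hp : ∀ x y, p x y = ∑ l, μ l x * ξ l y) :
    -3 * p 0 0 + 2 * p 2 0 - 3 * p 1 1 + 2 * p 2 1 ≤ 2 := by
  have key : ∀ l, -3 * (μ l 0 * ξ l 0) + 2 * (μ l 2 * ξ l 0)
      - 3 * (μ l 1 * ξ l 1) + 2 * (μ l 2 * ξ l 1) ≤ 2 * μ l 2 := by
    intro l
    have h2 : 2 * μ l 2 ≤ 3 * (μ l 0 + μ l 1) := by
      have := hnc l
      have h3 := hμ0 l 3
      have h4 := hμ0 l 4
      linarith
    have a0 := hξ0 l 0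
    have a1 := hξ1 l 0
    have b0 := hξ0 l 1
    have b1 := hξ1 l 1
    have m0 := hμ0 l 0
    have m1 := hμ0 l 1
    have m2 := hμ0 l 2
    nlinarith [mul_nonneg a0 m0, mul_nonneg b0 m1, mul_nonneg (sub_nonneg.2 a1) m0,
      mul_nonneg (sub_nonneg.2 b1) m1, mul_nonneg (sub_nonneg.2 a1) m2,
      mul_nonneg (sub_nonneg.2 b1) m2,
      mul_nonneg a0 (sub_nonneg.2 h2), mul_nonneg b0 (sub_nonneg.2 h2),
      mul_nonneg (mul_nonneg a0 b0) m2]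
  calc -3 * p 0 0 + 2 * p 2 0 - 3 * p 1 1 + 2 * p 2 1
      = ∑ l, (-3 * (μ l 0 * ξ l 0) + 2 * (μ l 2 * ξ l 0)
          - 3 * (μ l 1 * ξ l 1) + 2 * (μ l 2 * ξ l 1)) := by
        simp only [hp, Finset.mul_sum, ← Finset.sum_sub_distrib, ← Finset.sum_add_distrib]
    _ ≤ ∑ l, 2 * μ l 2 := Finset.sum_le_sum fun l _ => key l
    _ = 2 := by rw [← Finset.mul_sum, hμ1]; norm_num
end

section
/- Consider Scenario 4 with preparations x ∈ {0,1,2,3,4} and measurements y ∈ {0,1} with binary outcomes. Let Λ be a finite set, μ(λ|x) ≥ 0 with Σ_λ μ(λ|x) = 1 for each x, ξ(0|λ,y) ∈ [0,1] for all λ, y, and suppose the preparation-noncontextuality condition holds pointwise in λ: ¼(μ(λ|0) + μ(λ|1) + μ(λ|2) + μ(λ|3)) = (1/3)(μ(λ|0) + μ(λ|1) + μ(λ|4)) for every λ ∈ Λ. Define p_{x,y} := Σ_λ μ(λ|x) ξ(0|λ,y). Then p_{1,0} − 3p_{2,0} + p_{1,1} − 3p_{3,1} ≤ 1. -/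
open Finset

/-- noncontextuality inequality of Scenario 4:
`p_{1,0} − 3p_{2,0} + p_{1,1} − 3p_{3,1} ≤ 1`. -/
theorem stmt_13 {Λ : Type*} [Fintype Λ]
    (μ : Λ → Fin 5 → ℝ) (ξ : Λ → Fin 2 → ℝ)
    (hμ0 : ∀ l x, 0 ≤ μ l x)
    (hμ1 : ∀ x, ∑ l, μ l x = 1)
    (hξ0 : ∀ l y, 0 ≤ ξ l y)
    (hξ1 : ∀ l y, ξ l y ≤ 1)
    (hnc : ∀ l, (μ l 0 + μ l 1 + μ l 2 + μ l 3) / 4 = (μ l 0 + μ l 1 + μ l 4) / 3)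
    (p : Fin 5 → Fin 2 → ℝ)
    (hp : ∀ x y, p x y = ∑ l, μ l x * ξ l y) :
    p 1 0 - 3 * p 2 0 + p 1 1 - 3 * p 3 1 ≤ 1 := by
  have key : ∀ l : Λ, μ l 1 * ξ l 0 - 3 * (μ l 2 * ξ l 0) + μ l 1 * ξ l 1
      - 3 * (μ l 3 * ξ l 1) ≤ μ l 1 := by
    intro l
    have h := hnc l
    have h23 : μ l 1 ≤ 3 * μ l 2 + 3 * μ l 3 := by
      have := hμ0 l 0; have := hμ0 l 4; linarith
    rcases le_total (ξ l 0 + ξ l 1) 1 with hle | hge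
    · nlinarith [hμ0 l 1, hμ0 l 2, hμ0 l 3, hξ0 l 0, hξ0 l 1, hξ1 l 0, hξ1 l 1,
        mul_nonneg (hμ0 l 2) (hξ0 l 0), mul_nonneg (hμ0 l 3) (hξ0 l 1)]
    · rcases le_total (ξ l 0) (ξ l 1) with hxy | hxy
      · nlinarith [hμ0 l 1, hμ0 l 2, hμ0 l 3, hξ0 l 0, hξ0 l 1, hξ1 l 0, hξ1 l 1,
          mul_nonneg (hμ0 l 3) (sub_nonneg.2 hxy),
          mul_le_mul_of_nonneg_left (show ξ l 0 + ξ l 1 - 1 ≤ ξ l 0 by linarith [hξ1 l 1]) (hμ0 l 1)]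
      · nlinarith [hμ0 l 1, hμ0 l 2, hμ0 l 3, hξ0 l 0, hξ0 l 1, hξ1 l 0, hξ1 l 1,
          mul_nonneg (hμ0 l 2) (sub_nonneg.2 hxy),
          mul_le_mul_of_nonneg_left (show ξ l 0 + ξ l 1 - 1 ≤ ξ l 1 by linarith [hξ1 l 0]) (hμ0 l 1)]
  have hsum := Finset.sum_le_sum (fun l (_ : l ∈ Finset.univ) => key l)
  have h1 := hμ1 1
  have expand : ∑ l, (μ l 1 * ξ l 0 - 3 * (μ l 2 * ξ l 0) + μ l 1 * ξ l 1
      - 3 * (μ l 3 * ξ l 1)) = (∑ l, μ l 1 * ξ l 0) - 3 * (∑ l, μ l 2 * ξ l 0)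
      + (∑ l, μ l 1 * ξ l 1) - 3 * (∑ l, μ l 3 * ξ l 1) := by
    rw [Finset.mul_sum, Finset.mul_sum, ← Finset.sum_sub_distrib,
      ← Finset.sum_add_distrib, ← Finset.sum_sub_distrib]
  rw [hp 1 0, hp 2 0, hp 1 1, hp 3 1]
  rw [expand] at hsum
  linarith
end

section
/- Consider Scenario 5 with preparations x ∈ {0,1,2,3,4,5} and measurements y ∈ {0,1,2} with binary outcomes. Let Λ be a finite set, μ(λ|x) ≥ 0 with Σ_λ μ(λ|x) = 1 for each x, ξ(0|λ,y) ∈ [0,1] for all λ, y, and suppose the preparation-noncontextuality conditions hold pointwise in λ: ½(μ(λ|0) + μ(λ|1)) = ½(μ(λ|2) + μ(λ|3)) = ½(μ(λ|4) + μ(λ|5)) for every λ ∈ Λ. Define p_{x,y} := Σ_λ μ(λ|x) ξ(0|λ,y). Then ℐ₅ := p_{2,0} − p_{4,0} + p_{1,1} − p_{2,1} − p_{4,1} − p_{0,2} + p_{2,2} + p_{4,2} ≤ 2. -/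
open Finset

lemma key_stmt14 (a b c d e f x y z : ℝ)
    (ha : 0 ≤ a) (hb : 0 ≤ b) (hc : 0 ≤ c) (hd : 0 ≤ d) (he : 0 ≤ e) (hf : 0 ≤ f)
    (hx0 : 0 ≤ x) (hx1 : x ≤ 1) (hy0 : 0 ≤ y) (hy1 : y ≤ 1) (hz0 : 0 ≤ z) (hz1 : z ≤ 1)
    (h1 : a + b = c + d) (h2 : a + b = e + f) :
    c * x - e * x + b * y - c * y - e * y - a * z + c * z + e * z ≤ b + c := by
  have t1 : x * (c - e) ≤ max (c - e) 0 := by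
    rcases le_total (c - e) 0 with h | h
    · exact le_trans (mul_nonpos_of_nonneg_of_nonpos hx0 h) (le_max_right _ _)
    · refine le_trans ?_ (le_max_left _ _)
      nlinarith [mul_nonneg (sub_nonneg.2 hx1) h]
  have t2 : y * (b - c - e) ≤ max (b - c - e) 0 := by
    rcases le_total (b - c - e) 0 with h | h
    · exact le_trans (mul_nonpos_of_nonneg_of_nonpos hy0 h) (le_max_right _ _)
    · refine le_trans ?_ (le_max_left _ _)
      nlinarith [mul_nonneg (sub_nonneg.2 hy1) h]
  have t3 : z * (c + e - a) ≤ max (c + e - a) 0 := by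
    rcases le_total (c + e - a) 0 with h | h
    · exact le_trans (mul_nonpos_of_nonneg_of_nonpos hz0 h) (le_max_right _ _)
    · refine le_trans ?_ (le_max_left _ _)
      nlinarith [mul_nonneg (sub_nonneg.2 hz1) h]
  have hsum : max (c - e) 0 + max (b - c - e) 0 + max (c + e - a) 0 ≤ b + c := by
    rcases max_cases (c - e) 0 with ⟨e1, _⟩ | ⟨e1, _⟩ <;>
    rcases max_cases (b - c - e) 0 with ⟨e2, _⟩ | ⟨e2, _⟩ <;>
    rcases max_cases (c + e - a) 0 with ⟨e3, _⟩ | ⟨e3, _⟩ <;>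
    rw [e1, e2, e3] <;> linarith
  nlinarith [t1, t2, t3, hsum]

/-- noncontextuality inequality `ℐ₅ ≤ 2` of Scenario 5. -/
theorem stmt_14 {Λ : Type*} [Fintype Λ]
    (μ : Λ → Fin 6 → ℝ) (ξ : Λ → Fin 3 → ℝ)
    (hμ0 : ∀ l x, 0 ≤ μ l x)
    (hμ1 : ∀ x, ∑ l, μ l x = 1)
    (hξ0 : ∀ l y, 0 ≤ ξ l y)
    (hξ1 : ∀ l y, ξ l y ≤ 1)
    (hnc1 : ∀ l, (μ l 0 + μ l 1) / 2 = (μ l 2 + μ l 3) / 2)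
    (hnc2 : ∀ l, (μ l 0 + μ l 1) / 2 = (μ l 4 + μ l 5) / 2)
    (p : Fin 6 → Fin 3 → ℝ)
    (hp : ∀ x y, p x y = ∑ l, μ l x * ξ l y) :
    p 2 0 - p 4 0 + p 1 1 - p 2 1 - p 4 1 - p 0 2 + p 2 2 + p 4 2 ≤ 2 := by
  simp only [hp]
  rw [← Finset.sum_sub_distrib, ← Finset.sum_add_distrib, ← Finset.sum_sub_distrib,
    ← Finset.sum_sub_distrib, ← Finset.sum_sub_distrib, ← Finset.sum_add_distrib,
    ← Finset.sum_add_distrib]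
  have h2 : (2 : ℝ) = ∑ l, (μ l 1 + μ l 2) := by
    rw [Finset.sum_add_distrib, hμ1 1, hμ1 2]; norm_num
  rw [h2]
  refine Finset.sum_le_sum fun l _ => ?_
  have := key_stmt14 (μ l 0) (μ l 1) (μ l 2) (μ l 3) (μ l 4) (μ l 5)
    (ξ l 0) (ξ l 1) (ξ l 2)
    (hμ0 l 0) (hμ0 l 1) (hμ0 l 2) (hμ0 l 3) (hμ0 l 4) (hμ0 l 5)
    (hξ0 l 0) (hξ1 l 0) (hξ0 l 1) (hξ1 l 1) (hξ0 l 2) (hξ1 l 2)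
    (by have := hnc1 l; linarith) (by have := hnc2 l; linarith)
  linarith
end

section
/- Consider Scenario 6 with preparations x ∈ {0,1,…,6} and measurements y ∈ {0,1,2} with binary outcomes. Let Λ be a finite set, μ(λ|x) ≥ 0 with Σ_λ μ(λ|x) = 1 for each x, ξ(0|λ,y) ∈ [0,1] for all λ, y, and suppose the preparation-noncontextuality condition holds pointwise in λ: ¼(μ(λ|0) + μ(λ|1) + μ(λ|2) + μ(λ|3)) = (1/3)(μ(λ|4) + μ(λ|5) + μ(λ|6)) for every λ ∈ Λ. Define p_{x,y} := Σ_λ μ(λ|x) ξ(0|λ,y). Then ℐ₆³ := −3p_{1,0} − 3p_{3,0} + 4p_{5,0} + 3p_{0,2} + 3p_{2,2} − 4p_{5,2} ≤ 6. -/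
open Finset

lemma ptwise (a0 a1 a2 a3 a4 a5 a6 t s : ℝ)
    (h0 : 0 ≤ a0) (h1 : 0 ≤ a1) (h2 : 0 ≤ a2) (h3 : 0 ≤ a3)
    (h4 : 0 ≤ a4) (h5 : 0 ≤ a5) (h6 : 0 ≤ a6)
    (ht0 : 0 ≤ t) (ht1 : t ≤ 1) (hs0 : 0 ≤ s) (hs1 : s ≤ 1)
    (hnc : (a0 + a1 + a2 + a3) / 4 = (a4 + a5 + a6) / 3) :
    -3 * (a1 * t) - 3 * (a3 * t) + 4 * (a5 * t) + 3 * (a0 * s) + 3 * (a2 * s)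
      - 4 * (a5 * s) ≤ 3 * a0 + 3 * a2 := by
  have hA : 4 * a5 - 3 * a1 - 3 * a3 ≤ 3 * a0 + 3 * a2 := by linarith
  rcases le_or_gt (4 * a5 - 3 * a1 - 3 * a3) 0 with hA0 | hA0 <;>
  rcases le_or_gt (3 * a0 + 3 * a2 - 4 * a5) 0 with hB0 | hB0
  · nlinarith [mul_nonneg ht0 (neg_nonneg.2 hA0), mul_nonneg hs0 (neg_nonneg.2 hB0)]
  · nlinarith [mul_nonneg ht0 (neg_nonneg.2 hA0), mul_nonneg (sub_nonneg.2 hs1) hB0.le]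
  · nlinarith [mul_nonneg (sub_nonneg.2 ht1) hA0.le, mul_nonneg hs0 (neg_nonneg.2 hB0)]
  · nlinarith [mul_nonneg (sub_nonneg.2 ht1) hA0.le, mul_nonneg (sub_nonneg.2 hs1) hB0.le]

/-- noncontextuality inequality `ℐ₆³ ≤ 6` of Scenario 6. -/
theorem stmt_15 {Λ : Type*} [Fintype Λ]
    (μ : Λ → Fin 7 → ℝ) (ξ : Λ → Fin 3 → ℝ)
    (hμ0 : ∀ l x, 0 ≤ μ l x)
    (hμ1 : ∀ x, ∑ l, μ l x = 1)
    (hξ0 : ∀ l y, 0 ≤ ξ l y)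
    (hξ1 : ∀ l y, ξ l y ≤ 1)
    (hnc : ∀ l, (μ l 0 + μ l 1 + μ l 2 + μ l 3) / 4 = (μ l 4 + μ l 5 + μ l 6) / 3)
    (p : Fin 7 → Fin 3 → ℝ)
    (hp : ∀ x y, p x y = ∑ l, μ l x * ξ l y) :
    -3 * p 1 0 - 3 * p 3 0 + 4 * p 5 0 + 3 * p 0 2 + 3 * p 2 2 - 4 * p 5 2 ≤ 6 := by
  have hLHS : -3 * p 1 0 - 3 * p 3 0 + 4 * p 5 0 + 3 * p 0 2 + 3 * p 2 2 - 4 * p 5 2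
      = ∑ l, (-3 * (μ l 1 * ξ l 0) - 3 * (μ l 3 * ξ l 0) + 4 * (μ l 5 * ξ l 0)
          + 3 * (μ l 0 * ξ l 2) + 3 * (μ l 2 * ξ l 2) - 4 * (μ l 5 * ξ l 2)) := by
    simp only [hp, Finset.mul_sum]
    simp only [← Finset.sum_sub_distrib, ← Finset.sum_add_distrib]
  rw [hLHS]
  have hsum : ∑ l, (3 * μ l 0 + 3 * μ l 2) = 6 := by
    rw [Finset.sum_add_distrib, ← Finset.mul_sum, ← Finset.mul_sum, hμ1, hμ1]
    norm_num
  calc _ ≤ ∑ l, (3 * μ l 0 + 3 * μ l 2) := by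
        apply Finset.sum_le_sum
        intro l _
        exact ptwise (μ l 0) (μ l 1) (μ l 2) (μ l 3) (μ l 4) (μ l 5) (μ l 6)
          (ξ l 0) (ξ l 2) (hμ0 l 0) (hμ0 l 1) (hμ0 l 2) (hμ0 l 3) (hμ0 l 4) (hμ0 l 5) (hμ0 l 6)
          (hξ0 l 0) (hξ1 l 0) (hξ0 l 2) (hξ1 l 2) (hnc l)
    _ = 6 := hsum
end

section
/- Let p : Z × {0,…,7} × Y → ℝ be any family of real numbers (Z, Y finite) satisfying, for every z ∈ Z and y ∈ Y, the Scenario-7 indistinguishability equalities: the eight sums ¼(p(z|0,y)+p(z|1,y)+p(z|6,y)+p(z|7,y)), ¼(p(z|2,y)+p(z|3,y)+p(z|4,y)+p(z|5,y)), ¼(p(z|0,y)+p(z|2,y)+p(z|5,y)+p(z|7,y)), ¼(p(z|1,y)+p(z|3,y)+p(z|4,y)+p(z|6,y)), ¼(p(z|0,y)+p(z|3,y)+p(z|4,y)+p(z|7,y)), ¼(p(z|1,y)+p(z|2,y)+p(z|5,y)+p(z|6,y)), ¼(p(z|0,y)+p(z|3,y)+p(z|5,y)+p(z|6,y)), ¼(p(z|1,y)+p(z|2,y)+p(z|4,y)+p(z|7,y))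 are all equal. Then for all z and y: p(z|3,y) = p(z|1,y) + p(z|2,y) − p(z|0,y); p(z|5,y) = p(z|1,y) + p(z|4,y) − p(z|0,y); p(z|6,y) = p(z|2,y) + p(z|4,y) − p(z|0,y); and p(z|7,y) = p(z|1,y) + p(z|2,y) + p(z|4,y) − 2p(z|0,y). -/
open Finset

/-- the Scenario-7 indistinguishability equalities determine `p(z|3,y)`,
`p(z|5,y)`, `p(z|6,y)` and `p(z|7,y)` in terms of `p(z|0,y)`, `p(z|1,y)`, `p(z|2,y)`,
`p(z|4,y)`. -/
theorem stmt_16 {Z Y : Type*} [Fintype Z] [Fintype Y]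
    (p : Z → Fin 8 → Y → ℝ)
    (h1 : ∀ z y, (p z 0 y + p z 1 y + p z 6 y + p z 7 y) / 4
      = (p z 2 y + p z 3 y + p z 4 y + p z 5 y) / 4)
    (h2 : ∀ z y, (p z 0 y + p z 1 y + p z 6 y + p z 7 y) / 4
      = (p z 0 y + p z 2 y + p z 5 y + p z 7 y) / 4)
    (h3 : ∀ z y, (p z 0 y + p z 1 y + p z 6 y + p z 7 y) / 4
      = (p z 1 y + p z 3 y + p z 4 y + p z 6 y) / 4)
    (h4 : ∀ z y, (p z 0 y + p z 1 y + p z 6 y + p z 7 y) / 4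
      = (p z 0 y + p z 3 y + p z 4 y + p z 7 y) / 4)
    (h5 : ∀ z y, (p z 0 y + p z 1 y + p z 6 y + p z 7 y) / 4
      = (p z 1 y + p z 2 y + p z 5 y + p z 6 y) / 4)
    (h6 : ∀ z y, (p z 0 y + p z 1 y + p z 6 y + p z 7 y) / 4
      = (p z 0 y + p z 3 y + p z 5 y + p z 6 y) / 4)
    (h7 : ∀ z y, (p z 0 y + p z 1 y + p z 6 y + p z 7 y) / 4
      = (p z 1 y + p z 2 y + p z 4 y + p z 7 y) / 4) :
    (∀ z y, p z 3 y = p z 1 y + p z 2 y - p z 0 y) ∧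
    (∀ z y, p z 5 y = p z 1 y + p z 4 y - p z 0 y) ∧
    (∀ z y, p z 6 y = p z 2 y + p z 4 y - p z 0 y) ∧
    (∀ z y, p z 7 y = p z 1 y + p z 2 y + p z 4 y - 2 * p z 0 y) := by
  refine ⟨fun z y => ?_, fun z y => ?_, fun z y => ?_, fun z y => ?_⟩ <;>
    have e1 := h1 z y <;> have e2 := h2 z y <;> have e3 := h3 z y <;>
    have e4 := h4 z y <;> have e5 := h5 z y <;> have e6 := h6 z y <;>
    have e7 := h7 z y <;> linarith
end

section
/- Consider Scenario 7 with preparations x ∈ {0,…,7} and measurements y ∈ {0,1,2} with binary outcomes. Let Λ be a finite set, μ(λ|x) ≥ 0 with Σ_λ μ(λ|x) = 1 for each x, ξ(0|λ,y) ∈ [0,1] for all λ, y, and suppose that for every λ ∈ Λ the eight sums ¼(μ(λ|0)+μ(λ|1)+μ(λ|6)+μ(λ|7)), ¼(μ(λ|2)+μ(λ|3)+μ(λ|4)+μ(λ|5)), ¼(μ(λ|0)+μ(λ|2)+μ(λ|5)+μ(λ|7)), ¼(μ(λ|1)+μ(λ|3)+μ(λ|4)+μ(λ|6)), ¼(μ(λ|0)+μ(λ|3)+μ(λ|4)+μ(λ|7)),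 ¼(μ(λ|1)+μ(λ|2)+μ(λ|5)+μ(λ|6)), ¼(μ(λ|0)+μ(λ|3)+μ(λ|5)+μ(λ|6)), ¼(μ(λ|1)+μ(λ|2)+μ(λ|4)+μ(λ|7)) are all equal. Define p_{x,y} := Σ_λ μ(λ|x) ξ(0|λ,y). Then ℐ₇ := p_{0,0} − p_{1,0} + p_{0,1} − p_{4,1} + p_{0,2} − p_{2,2} ≤ 1. -/
open Finset

lemma stmt_17_key (m0 m1 m2 m3 m4 m5 m6 m7 a b c : ℝ)
    (n0 : 0 ≤ m0) (n1 : 0 ≤ m1) (n2 : 0 ≤ m2) (n3 : 0 ≤ m3) (n4 : 0 ≤ m4)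
    (n5 : 0 ≤ m5) (n6 : 0 ≤ m6) (n7 : 0 ≤ m7)
    (ha0 : 0 ≤ a) (ha1 : a ≤ 1) (hb0 : 0 ≤ b) (hb1 : b ≤ 1) (hc0 : 0 ≤ c) (hc1 : c ≤ 1)
    (eC : m0 + m7 = m3 + m4) (eB : m1 + m6 = m2 + m5) (eD : m1 + m6 = m3 + m4)
    (eE : m0 + m7 = m2 + m5) (eF : m1 + m7 = m3 + m5) (eG : m0 + m6 = m2 + m4) :
    m0*a - m1*a + m0*b - m4*b + m0*c - m2*c ≤ m0 := by
  have v5 : 0 ≤ m1 + m4 - m0 := by linarith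
  have v3 : 0 ≤ m1 + m2 - m0 := by linarith
  have v6 : 0 ≤ m2 + m4 - m0 := by linarith
  have v7 : 0 ≤ m1 + m2 + m4 - 2*m0 := by linarith
  nlinarith [mul_nonneg (mul_nonneg (mul_nonneg (sub_nonneg.2 ha1) (sub_nonneg.2 hb1)) (sub_nonneg.2 hc1)) n0,
    mul_nonneg (mul_nonneg (mul_nonneg ha0 (sub_nonneg.2 hb1)) (sub_nonneg.2 hc1)) n1,
    mul_nonneg (mul_nonneg (mul_nonneg (sub_nonneg.2 ha1) hb0) (sub_nonneg.2 hc1)) n4,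
    mul_nonneg (mul_nonneg (mul_nonneg (sub_nonneg.2 ha1) (sub_nonneg.2 hb1)) hc0) n2,
    mul_nonneg (mul_nonneg (mul_nonneg ha0 hb0) (sub_nonneg.2 hc1)) v5,
    mul_nonneg (mul_nonneg (mul_nonneg ha0 (sub_nonneg.2 hb1)) hc0) v3,
    mul_nonneg (mul_nonneg (mul_nonneg (sub_nonneg.2 ha1) hb0) hc0) v6,
    mul_nonneg (mul_nonneg (mul_nonneg ha0 hb0) hc0) v7]

/-- noncontextuality inequality `ℐ₇ ≤ 1` of Scenario 7. -/
theorem stmt_17 {Λ : Type*} [Fintype Λ]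
    (μ : Λ → Fin 8 → ℝ) (ξ : Λ → Fin 3 → ℝ)
    (hμ0 : ∀ l x, 0 ≤ μ l x)
    (hμ1 : ∀ x, ∑ l, μ l x = 1)
    (hξ0 : ∀ l y, 0 ≤ ξ l y)
    (hξ1 : ∀ l y, ξ l y ≤ 1)
    (h1 : ∀ l, (μ l 0 + μ l 1 + μ l 6 + μ l 7) / 4 = (μ l 2 + μ l 3 + μ l 4 + μ l 5) / 4)
    (h2 : ∀ l, (μ l 0 + μ l 1 + μ l 6 + μ l 7) / 4 = (μ l 0 + μ l 2 + μ l 5 + μ l 7) / 4)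
    (h3 : ∀ l, (μ l 0 + μ l 1 + μ l 6 + μ l 7) / 4 = (μ l 1 + μ l 3 + μ l 4 + μ l 6) / 4)
    (h4 : ∀ l, (μ l 0 + μ l 1 + μ l 6 + μ l 7) / 4 = (μ l 0 + μ l 3 + μ l 4 + μ l 7) / 4)
    (h5 : ∀ l, (μ l 0 + μ l 1 + μ l 6 + μ l 7) / 4 = (μ l 1 + μ l 2 + μ l 5 + μ l 6) / 4)
    (h6 : ∀ l, (μ l 0 + μ l 1 + μ l 6 + μ l 7) / 4 = (μ l 0 + μ l 3 + μ l 5 + μ l 6) / 4)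
    (h7 : ∀ l, (μ l 0 + μ l 1 + μ l 6 + μ l 7) / 4 = (μ l 1 + μ l 2 + μ l 4 + μ l 7) / 4)
    (p : Fin 8 → Fin 3 → ℝ)
    (hp : ∀ x y, p x y = ∑ l, μ l x * ξ l y) :
    p 0 0 - p 1 0 + p 0 1 - p 4 1 + p 0 2 - p 2 2 ≤ 1 := by
  have key : p 0 0 - p 1 0 + p 0 1 - p 4 1 + p 0 2 - p 2 2
      = ∑ l, (μ l 0 * ξ l 0 - μ l 1 * ξ l 0 + μ l 0 * ξ l 1 - μ l 4 * ξ l 1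
              + μ l 0 * ξ l 2 - μ l 2 * ξ l 2) := by
    simp only [hp, ← Finset.sum_sub_distrib, ← Finset.sum_add_distrib]
  rw [key, ← hμ1 0]
  apply Finset.sum_le_sum
  intro l _
  have eC : μ l 0 + μ l 7 = μ l 3 + μ l 4 := by have := h3 l; linarith
  have eB : μ l 1 + μ l 6 = μ l 2 + μ l 5 := by have := h2 l; linarith
  have eD : μ l 1 + μ l 6 = μ l 3 + μ l 4 := by have := h4 l; linarith
  have eE : μ l 0 + μ l 7 = μ l 2 + μ l 5 := by have := h5 l; linarith
  have eF : μ l 1 + μ l 7 = μ l 3 + μ l 5 := by have := h6 l; linarith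
  have eG : μ l 0 + μ l 6 = μ l 2 + μ l 4 := by have := h7 l; linarith
  exact stmt_17_key (μ l 0) (μ l 1) (μ l 2) (μ l 3) (μ l 4) (μ l 5) (μ l 6) (μ l 7)
    (ξ l 0) (ξ l 1) (ξ l 2)
    (hμ0 l 0) (hμ0 l 1) (hμ0 l 2) (hμ0 l 3) (hμ0 l 4) (hμ0 l 5) (hμ0 l 6) (hμ0 l 7)
    (hξ0 l 0) (hξ1 l 0) (hξ0 l 1) (hξ1 l 1) (hξ0 l 2) (hξ1 l 2)
    eC eB eD eE eF eG
end

section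
/- There exist 2 × 2 complex density matrices ρ₀, …, ρ₇ (positive semidefinite with trace 1) such that the eight matrix sums ¼(ρ₀+ρ₁+ρ₆+ρ₇), ¼(ρ₂+ρ₃+ρ₄+ρ₅), ¼(ρ₀+ρ₂+ρ₅+ρ₇), ¼(ρ₁+ρ₃+ρ₄+ρ₆), ¼(ρ₀+ρ₃+ρ₄+ρ₇), ¼(ρ₁+ρ₂+ρ₅+ρ₆), ¼(ρ₀+ρ₃+ρ₅+ρ₆), ¼(ρ₁+ρ₂+ρ₄+ρ₇) are all equal, and 2 × 2 complex matrices M₀, M₁, M₂ with 0 ≤ M_y ≤ I in the Loewner order, such that, writing p_{x,y} := Re(Tr(ρ_x M_y)), one has ℐ₇ := p_{0,0} − p_{1,0} + p_{0,1} − p_{4,1} + p_{0,2} − p_{2,2} = √3. (Such a strategy is obtained by taking ρ_x to be the qubit states whose Bloch vectors are the eight vertices (±1, ±1, ±1)/√3 of a cube, indexed by the 3-bit string x, and M_y the projectors onto the +1 eigenspaces of the Pauli matrices.) -/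
open Finset ComplexOrder Matrix

noncomputable def rr : ℂ := ((Real.sqrt 3 : ℝ) : ℂ)⁻¹

lemma hrr : rr * rr = 1/3 := by
  unfold rr; rw [← mul_inv]; norm_cast
  rw [Real.mul_self_sqrt (by norm_num)]; norm_num

noncomputable def qρ (a b z : ℤ) : Matrix (Fin 2) (Fin 2) ℂ :=
  (1/2 : ℂ) • !![1 + z*rr, a*rr - b*rr*Complex.I; a*rr + b*rr*Complex.I, 1 - z*rr]

lemma psd_of_proj (A : Matrix (Fin 2) (Fin 2) ℂ) (h1 : Aᴴ = A) (h2 : A*A = A) :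
    A.PosSemidef := by
  have := Matrix.posSemidef_conjTranspose_mul_self A
  rwa [h1, h2] at this

lemma qρ_herm (a b z : ℤ) : (qρ a b z)ᴴ = qρ a b z := by
  unfold qρ rr
  ext i j
  fin_cases i <;> fin_cases j <;> simp [Matrix.conjTranspose_apply] <;> ring

lemma qρ_idem (a b z : ℤ) (h : a^2 + b^2 + z^2 = 3) : qρ a b z * qρ a b z = qρ a b z := by
  have hc : (a:ℂ)^2 + (b:ℂ)^2 + (z:ℂ)^2 = 3 := by exact_mod_cast congrArg (Int.cast : ℤ → ℂ) h
  unfold qρ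
  ext i j
  fin_cases i <;> fin_cases j <;>
    simp [Matrix.mul_apply, Fin.sum_univ_two] <;>
    first
    | ring1
    | linear_combination (-(b:ℂ)^2*rr*rr/4) * Complex.I_sq + (rr*rr/4) * hc + (3/4) * hrr

lemma qρ_psd (a b z : ℤ) (h : a^2 + b^2 + z^2 = 3) : (qρ a b z).PosSemidef :=
  psd_of_proj _ (qρ_herm a b z) (qρ_idem a b z h)

lemma qρ_trace (a b z : ℤ) : (qρ a b z).trace = 1 := by
  simp [qρ, Matrix.trace_fin_two]; ring

noncomputable def qM : Fin 3 → Matrix (Fin 2) (Fin 2) ℂ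
  | 0 => (1/2 : ℂ) • !![1, 1; 1, 1]
  | 1 => (1/2 : ℂ) • !![1, -Complex.I; Complex.I, 1]
  | 2 => !![(1:ℂ), 0; 0, 0]

lemma qM_psd : ∀ y, (qM y).PosSemidef := by
  intro y
  fin_cases y <;>
  · apply psd_of_proj
    · ext i j
      fin_cases i <;> fin_cases j <;> simp [qM, Matrix.conjTranspose_apply]
    · ext i j
      fin_cases i <;> fin_cases j <;>
        simp [qM, Matrix.mul_apply, Fin.sum_univ_two] <;>
        first
        | ring1
        | linear_combination (-(1:ℂ)/4) * Complex.I_sq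
        | linear_combination ((1:ℂ)/4) * Complex.I_sq

lemma qM_psd' : ∀ y, (1 - qM y).PosSemidef := by
  intro y
  fin_cases y <;>
  · apply psd_of_proj
    · ext i j
      fin_cases i <;> fin_cases j <;>
        simp [qM, Matrix.conjTranspose_apply, Matrix.one_apply, Matrix.sub_apply]
    · ext i j
      fin_cases i <;> fin_cases j <;>
        simp [qM, Matrix.mul_apply, Fin.sum_univ_two, Matrix.one_apply, Matrix.sub_apply] <;>
        first
        | ring1
        | linear_combination (-(1:ℂ)/4) * Complex.I_sq
        | linear_combination ((1:ℂ)/4) * Complex.I_sq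

lemma tr0 (a b z : ℤ) : (qρ a b z * qM 0).trace = 1/2 + (a:ℂ) * rr / 2 := by
  simp [qρ, qM, Matrix.trace_fin_two, Matrix.mul_apply, Fin.sum_univ_two]
  ring

lemma tr1 (a b z : ℤ) : (qρ a b z * qM 1).trace = 1/2 + (b:ℂ) * rr / 2 := by
  simp [qρ, qM, Matrix.trace_fin_two, Matrix.mul_apply, Fin.sum_univ_two]
  linear_combination (-(b:ℂ)*rr/2) * Complex.I_sq

lemma tr2 (a b z : ℤ) : (qρ a b z * qM 2).trace = 1/2 + (z:ℂ) * rr / 2 := by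
  simp [qρ, qM, Matrix.trace_fin_two, Matrix.mul_apply, Fin.sum_univ_two]
  ring

noncomputable def qρf : Fin 8 → Matrix (Fin 2) (Fin 2) ℂ
  | 0 => qρ 1 1 1
  | 1 => qρ (-1) 1 1
  | 2 => qρ 1 1 (-1)
  | 3 => qρ (-1) 1 (-1)
  | 4 => qρ 1 (-1) 1
  | 5 => qρ (-1) (-1) 1
  | 6 => qρ 1 (-1) (-1)
  | 7 => qρ (-1) (-1) (-1)

noncomputable def qK : Matrix (Fin 2) (Fin 2) ℂ := (1/2:ℂ) • !![1,0;0,1]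
noncomputable def qX : Matrix (Fin 2) (Fin 2) ℂ := (rr/2) • !![0,1;1,0]
noncomputable def qY : Matrix (Fin 2) (Fin 2) ℂ := (rr/2) • !![0,-Complex.I;Complex.I,0]
noncomputable def qZ : Matrix (Fin 2) (Fin 2) ℂ := (rr/2) • !![1,0;0,-1]

lemma qρ_eq (a b z : ℤ) : qρ a b z = qK + (a:ℂ)•qX + (b:ℂ)•qY + (z:ℂ)•qZ := by
  ext i j
  fin_cases i <;> fin_cases j <;> simp [qρ, qK, qX, qY, qZ, Matrix.add_apply] <;> ring

lemma qf0 : qρf 0 = qρ 1 1 1 := rfl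
lemma qf1 : qρf 1 = qρ (-1) 1 1 := rfl
lemma qf2 : qρf 2 = qρ 1 1 (-1) := rfl
lemma qf3 : qρf 3 = qρ (-1) 1 (-1) := rfl
lemma qf4 : qρf 4 = qρ 1 (-1) 1 := rfl
lemma qf5 : qρf 5 = qρ (-1) (-1) 1 := rfl
lemma qf6 : qρf 6 = qρ 1 (-1) (-1) := rfl
lemma qf7 : qρf 7 = qρ (-1) (-1) (-1) := rfl

lemma rr_real : rr = (((Real.sqrt 3)⁻¹ : ℝ) : ℂ) := by unfold rr; push_cast; ring

lemma tr0re (a b z : ℤ) :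
    ((qρ a b z * qM 0).trace).re = 1/2 + (a:ℝ) * (Real.sqrt 3)⁻¹ / 2 := by
  rw [tr0, rr_real,
    show (1/2 + (a:ℂ) * (((Real.sqrt 3)⁻¹ : ℝ):ℂ) / 2)
        = ((1/2 + (a:ℝ) * (Real.sqrt 3)⁻¹ / 2 : ℝ) : ℂ) by push_cast; ring]
  exact Complex.ofReal_re _

lemma tr1re (a b z : ℤ) :
    ((qρ a b z * qM 1).trace).re = 1/2 + (b:ℝ) * (Real.sqrt 3)⁻¹ / 2 := by
  rw [tr1, rr_real,
    show (1/2 + (b:ℂ) * (((Real.sqrt 3)⁻¹ : ℝ):ℂ) / 2)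
        = ((1/2 + (b:ℝ) * (Real.sqrt 3)⁻¹ / 2 : ℝ) : ℂ) by push_cast; ring]
  exact Complex.ofReal_re _

lemma tr2re (a b z : ℤ) :
    ((qρ a b z * qM 2).trace).re = 1/2 + (z:ℝ) * (Real.sqrt 3)⁻¹ / 2 := by
  rw [tr2, rr_real,
    show (1/2 + (z:ℂ) * (((Real.sqrt 3)⁻¹ : ℝ):ℂ) / 2)
        = ((1/2 + (z:ℝ) * (Real.sqrt 3)⁻¹ / 2 : ℝ) : ℂ) by push_cast; ring]
  exact Complex.ofReal_re _

/-- a qubit strategy for Scenario 7 attaining `ℐ₇ = √3`. -/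
theorem stmt_18 :
    ∃ (ρ : Fin 8 → Matrix (Fin 2) (Fin 2) ℂ) (M : Fin 3 → Matrix (Fin 2) (Fin 2) ℂ),
      (∀ x, (ρ x).PosSemidef) ∧
      (∀ x, (ρ x).trace = 1) ∧
      ((1 / 4 : ℂ) • (ρ 0 + ρ 1 + ρ 6 + ρ 7) = (1 / 4 : ℂ) • (ρ 2 + ρ 3 + ρ 4 + ρ 5)) ∧
      ((1 / 4 : ℂ) • (ρ 0 + ρ 1 + ρ 6 + ρ 7) = (1 / 4 : ℂ) • (ρ 0 + ρ 2 + ρ 5 + ρ 7)) ∧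
      ((1 / 4 : ℂ) • (ρ 0 + ρ 1 + ρ 6 + ρ 7) = (1 / 4 : ℂ) • (ρ 1 + ρ 3 + ρ 4 + ρ 6)) ∧
      ((1 / 4 : ℂ) • (ρ 0 + ρ 1 + ρ 6 + ρ 7) = (1 / 4 : ℂ) • (ρ 0 + ρ 3 + ρ 4 + ρ 7)) ∧
      ((1 / 4 : ℂ) • (ρ 0 + ρ 1 + ρ 6 + ρ 7) = (1 / 4 : ℂ) • (ρ 1 + ρ 2 + ρ 5 + ρ 6)) ∧
      ((1 / 4 : ℂ) • (ρ 0 + ρ 1 + ρ 6 + ρ 7) = (1 / 4 : ℂ) • (ρ 0 + ρ 3 + ρ 5 + ρ 6)) ∧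
      ((1 / 4 : ℂ) • (ρ 0 + ρ 1 + ρ 6 + ρ 7) = (1 / 4 : ℂ) • (ρ 1 + ρ 2 + ρ 4 + ρ 7)) ∧
      (∀ y, (M y).PosSemidef) ∧
      (∀ y, (1 - M y).PosSemidef) ∧
      (((ρ 0 * M 0).trace).re - ((ρ 1 * M 0).trace).re
        + ((ρ 0 * M 1).trace).re - ((ρ 4 * M 1).trace).re
        + ((ρ 0 * M 2).trace).re - ((ρ 2 * M 2).trace).re = Real.sqrt 3) := by
  refine ⟨qρf, qM, ?_, ?_, ?_, ?_, ?_, ?_, ?_, ?_, ?_, qM_psd, qM_psd', ?_⟩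
  · intro x; fin_cases x <;> exact qρ_psd _ _ _ (by norm_num)
  · intro x; fin_cases x <;> exact qρ_trace _ _ _
  rotate_right
  · simp only [qf0, qf1, qf2, qf4, qf6]
    rw [tr0re, tr0re, tr1re, tr1re, tr2re, tr2re]
    have h3 : Real.sqrt 3 * Real.sqrt 3 = 3 := Real.mul_self_sqrt (by norm_num)
    have hne : Real.sqrt 3 ≠ 0 := by positivity
    push_cast
    field_simp
    linarith [h3]
  all_goals
    simp only [qf0, qf1, qf2, qf3, qf4, qf5, qf6, qf7, qρ_eq]
  all_goals (push_cast; module)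
end

section
/- Consider Scenario 8 with preparations x ∈ {0,…,7} and measurements y ∈ {0,1,2} with binary outcomes z ∈ {0,1}. Let Λ be a finite set, μ(λ|x) ≥ 0 with Σ_λ μ(λ|x) = 1 for each x, ξ(z|λ,y) ≥ 0 with ξ(0|λ,y) + ξ(1|λ,y) = 1 for all λ, y. Suppose (i) for every λ ∈ Λ the eight preparation sums ¼(μ(λ|0)+μ(λ|1)+μ(λ|6)+μ(λ|7)), ¼(μ(λ|2)+μ(λ|3)+μ(λ|4)+μ(λ|5)), ¼(μ(λ|0)+μ(λ|2)+μ(λ|5)+μ(λ|7)), ¼(μ(λ|1)+μ(λ|3)+μ(λ|4)+μ(λ|6)), ¼(μ(λ|0)+μ(λ|3)+μ(λ|4)+μ(λ|7)), ¼(μ(λ|1)+μ(λ|2)+μ(λ|5)+μ(λ|6)), ¼(μ(λ|0)+μ(λ|3)+μ(λ|5)+μ(λ|6)), ¼(μ(λ|1)+μ(λ|2)+μ(λ|4)+μ(λ|7)) are all equal, and (ii) for every λ ∈ Λ the measurement-noncontextuality condition (1/3)(ξ(0|λ,0)+ξ(0|λ,1)+ξ(0|λ,2)) = (1/3)(ξ(1|λ,0)+ξ(1|λ,1)+ξ(1|λ,2))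 holds. Define p_{x,y} := Σ_λ μ(λ|x) ξ(0|λ,y). Then ℐ₈ := −p_{1,0} + p_{4,0} − 2p_{0,1} + p_{2,1} + p_{4,1} ≤ 1. -/
open Finset

lemma core (m0 m1 m2 m4 a0 a1 : ℝ)
    (h0 : 0 ≤ m0) (h1 : 0 ≤ m1) (h2 : 0 ≤ m2) (h4 : 0 ≤ m4)
    (hc1 : m0 ≤ m1 + m2) (hc3 : m0 ≤ m2 + m4)
    (hc4 : 2*m0 ≤ m1 + m2 + m4)
    (ha0 : 0 ≤ a0) (ha0' : a0 ≤ 1) (ha1 : 0 ≤ a1) (ha1' : a1 ≤ 1)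
    (hs : 1/2 ≤ a0 + a1) (hs' : a0 + a1 ≤ 3/2) :
    m4*(a0+a1) + m2*a1 - m1*a0 - 2*m0*a1 ≤ (3*m4 + 2*m2 - 3*m0)/2 := by
  obtain ⟨P, T, R, hP0, hT0, hR0, c1, c2, c3, c4⟩ :
      ∃ P T R : ℝ, 0 ≤ P ∧ 0 ≤ T ∧ 0 ≤ R ∧ P + T ≤ a0 ∧ P + R + T ≤ 1 - a1 ∧
        R + T ≤ 3/2 - a0 - a1 ∧ 3/2 - 2*a1 ≤ P + R + 2*T := by
    rcases le_total a0 (1/2) with h | h <;> rcases le_total a1 (1/2) with h' | h'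
    · exact ⟨0, 1/2 - a1, 1/2, by linarith, by linarith, by linarith, by linarith,
        by linarith, by linarith, by linarith⟩
    · rcases le_total a1 (3/4) with h'' | h''
      · exact ⟨0, 0, 3/2 - 2*a1, by linarith, by linarith, by linarith, by linarith,
          by linarith, by linarith, by linarith⟩
      · exact ⟨0, 0, 0, by linarith, by linarith, by linarith, by linarith,
          by linarith, by linarith, by linarith⟩
    · exact ⟨a0 - 1/2, 1/2 - a1, 1 - a0, by linarith, by linarith, by linarith,
        by linarith, by linarith, by linarith, by linarith⟩
    · rcases le_total (2 - a0 - 2*a1) 0 with h'' | h''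
      · exact ⟨a0 - 1/2, 0, 0, by linarith, by linarith, by linarith, by linarith,
          by linarith, by linarith, by linarith⟩
      · exact ⟨a0 - 1/2, 0, 2 - a0 - 2*a1, by linarith, by linarith, by linarith,
          by linarith, by linarith, by linarith, by linarith⟩
  nlinarith [mul_nonneg hP0 (by linarith : (0:ℝ) ≤ m1 + m2 - m0),
    mul_nonneg hR0 (by linarith : (0:ℝ) ≤ m2 + m4 - m0),
    mul_nonneg hT0 (by linarith : (0:ℝ) ≤ m1 + m2 + m4 - 2*m0),
    mul_nonneg h1 (by linarith : (0:ℝ) ≤ a0 - P - T),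
    mul_nonneg h2 (by linarith : (0:ℝ) ≤ 1 - a1 - P - R - T),
    mul_nonneg h4 (by linarith : (0:ℝ) ≤ 3/2 - a0 - a1 - R - T),
    mul_nonneg h0 (by linarith : (0:ℝ) ≤ P + R + 2*T - (3/2 - 2*a1))]


/-- noncontextuality inequality `ℐ₈ ≤ 1` of Scenario 8, with both
preparation and measurement noncontextuality conditions. -/
theorem stmt_19 {Λ : Type*} [Fintype Λ]
    (μ : Λ → Fin 8 → ℝ) (ξ : Λ → Fin 2 → Fin 3 → ℝ)
    (hμ0 : ∀ l x, 0 ≤ μ l x)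
    (hμ1 : ∀ x, ∑ l, μ l x = 1)
    (hξ0 : ∀ l z y, 0 ≤ ξ l z y)
    (hξ1 : ∀ l y, ξ l 0 y + ξ l 1 y = 1)
    (h1 : ∀ l, (μ l 0 + μ l 1 + μ l 6 + μ l 7) / 4 = (μ l 2 + μ l 3 + μ l 4 + μ l 5) / 4)
    (h2 : ∀ l, (μ l 0 + μ l 1 + μ l 6 + μ l 7) / 4 = (μ l 0 + μ l 2 + μ l 5 + μ l 7) / 4)
    (h3 : ∀ l, (μ l 0 + μ l 1 + μ l 6 + μ l 7) / 4 = (μ l 1 + μ l 3 + μ l 4 + μ l 6) / 4)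
    (h4 : ∀ l, (μ l 0 + μ l 1 + μ l 6 + μ l 7) / 4 = (μ l 0 + μ l 3 + μ l 4 + μ l 7) / 4)
    (h5 : ∀ l, (μ l 0 + μ l 1 + μ l 6 + μ l 7) / 4 = (μ l 1 + μ l 2 + μ l 5 + μ l 6) / 4)
    (h6 : ∀ l, (μ l 0 + μ l 1 + μ l 6 + μ l 7) / 4 = (μ l 0 + μ l 3 + μ l 5 + μ l 6) / 4)
    (h7 : ∀ l, (μ l 0 + μ l 1 + μ l 6 + μ l 7) / 4 = (μ l 1 + μ l 2 + μ l 4 + μ l 7) / 4)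
    (hmc : ∀ l, (ξ l 0 0 + ξ l 0 1 + ξ l 0 2) / 3 = (ξ l 1 0 + ξ l 1 1 + ξ l 1 2) / 3)
    (p : Fin 8 → Fin 3 → ℝ)
    (hp : ∀ x y, p x y = ∑ l, μ l x * ξ l 0 y) :
    -p 1 0 + p 4 0 - 2 * p 0 1 + p 2 1 + p 4 1 ≤ 1 := by
  have key : ∀ l, -(μ l 1 * ξ l 0 0) + μ l 4 * ξ l 0 0 - 2 * (μ l 0 * ξ l 0 1)
      + μ l 2 * ξ l 0 1 + μ l 4 * ξ l 0 1 ≤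
      (-(μ l 0) - 3 * μ l 1 + μ l 2 - μ l 3 + 3 * μ l 4 + μ l 5 + 5 * μ l 6 + 3 * μ l 7) / 8 := by
    intro l
    have e3 : μ l 3 = μ l 1 + μ l 2 - μ l 0 := by
      have := h1 l; have := h2 l; have := h3 l; have := h4 l
      have := h5 l; have := h6 l; have := h7 l; linarith
    have e5 : μ l 5 = μ l 1 + μ l 4 - μ l 0 := by
      have := h1 l; have := h2 l; have := h3 l; have := h4 l
      have := h5 l; have := h6 l; have := h7 l; linarith
    have e6 : μ l 6 = μ l 2 + μ l 4 - μ l 0 := by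
      have := h1 l; have := h2 l; have := h3 l; have := h4 l
      have := h5 l; have := h6 l; have := h7 l; linarith
    have e7 : μ l 7 = μ l 1 + μ l 2 + μ l 4 - 2 * μ l 0 := by
      have := h1 l; have := h2 l; have := h3 l; have := h4 l
      have := h5 l; have := h6 l; have := h7 l; linarith
    have ha0' : ξ l 0 0 ≤ 1 := by have := hξ1 l 0; have := hξ0 l 1 0; linarith
    have ha1' : ξ l 0 1 ≤ 1 := by have := hξ1 l 1; have := hξ0 l 1 1; linarith
    have hsum : ξ l 0 0 + ξ l 0 1 + ξ l 0 2 = 3/2 := by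
      have := hmc l; have := hξ1 l 0; have := hξ1 l 1; have := hξ1 l 2; linarith
    have hs : 1/2 ≤ ξ l 0 0 + ξ l 0 1 := by
      have := hξ1 l 2; have := hξ0 l 1 2; linarith
    have hs' : ξ l 0 0 + ξ l 0 1 ≤ 3/2 := by have := hξ0 l 0 2; linarith
    have := core (μ l 0) (μ l 1) (μ l 2) (μ l 4) (ξ l 0 0) (ξ l 0 1)
      (hμ0 l 0) (hμ0 l 1) (hμ0 l 2) (hμ0 l 4)
      (by have := hμ0 l 3; linarith) (by have := hμ0 l 6; linarith)
      (by have := hμ0 l 7; linarith)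
      (hξ0 l 0 0) ha0' (hξ0 l 0 1) ha1' hs hs'
    linarith
  have hsum := Finset.sum_le_sum (fun l (_ : l ∈ Finset.univ) => key l)
  have lhs_eq : -p 1 0 + p 4 0 - 2 * p 0 1 + p 2 1 + p 4 1
      = ∑ l, (-(μ l 1 * ξ l 0 0) + μ l 4 * ξ l 0 0 - 2 * (μ l 0 * ξ l 0 1)
        + μ l 2 * ξ l 0 1 + μ l 4 * ξ l 0 1) := by
    rw [hp 1 0, hp 4 0, hp 0 1, hp 2 1, hp 4 1]
    rw [Finset.sum_add_distrib, Finset.sum_add_distrib, Finset.sum_sub_distrib,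
      Finset.sum_add_distrib, Finset.sum_neg_distrib, ← Finset.mul_sum]
  have rhs_eq : ∑ l, ((-(μ l 0) - 3 * μ l 1 + μ l 2 - μ l 3 + 3 * μ l 4 + μ l 5
      + 5 * μ l 6 + 3 * μ l 7) / 8) = 1 := by
    rw [← Finset.sum_div]
    rw [Finset.sum_add_distrib, Finset.sum_add_distrib, Finset.sum_add_distrib,
      Finset.sum_add_distrib, Finset.sum_sub_distrib, Finset.sum_add_distrib,
      Finset.sum_sub_distrib, Finset.sum_neg_distrib, ← Finset.mul_sum, ← Finset.mul_sum,
      ← Finset.mul_sum, ← Finset.mul_sum]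
    rw [hμ1 0, hμ1 1, hμ1 2, hμ1 3, hμ1 4, hμ1 5, hμ1 6, hμ1 7]
    norm_num
  rw [lhs_eq]
  calc _ ≤ _ := hsum
  _ = 1 := rhs_eq
end
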